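/- Let Q be an almost structurally complete semisimple quasivariety. Then Q is structurally complete if and only if either some elementary extension of the free algebra F of denumerable rank for Q has an idempotent element, or Q is a minimal quasivariety. -/

import Mathlib

open FirstOrder Language

universe u

/-- A quasi-identity `∀ x̄ [⋀ i, lhs i ≐ rhs i → cl ≐ cr]` in `k` variables with `n` premises. -/
structure QuasiId (L : FirstOrder.Language.{u, u}) where
  k : ℕ
  n : ℕ
  lhs : Fin n → L.Term (Fin k)
  rhs : Fin n → L.Term (Fin k)
  cl : L.Term (Fin k)
  cr : L.Term (Fin k)

variable {L : FirstOrder.Language.{u, u}}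

/-- Satisfaction of a quasi-identity in an algebra. -/
def QuasiId.Holds (q : QuasiId L) (M : Type u) [L.Structure M] : Prop :=
  ∀ x : Fin q.k → M,
    (∀ i, (q.lhs i).realize x = (q.rhs i).realize x) →
      q.cl.realize x = q.cr.realize x

/-- Satisfiability of the premise of a quasi-identity in an algebra. -/
def QuasiId.PremiseSat (q : QuasiId L) (M : Type u) [L.Structure M] : Prop :=
  ∃ x : Fin q.k → M, ∀ i, (q.lhs i).realize x = (q.rhs i).realize x

/-- An identity `∀ x̄, lhs ≐ rhs`. -/
structure EqId (L : FirstOrder.Language.{u, u}) where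
  k : ℕ
  lhs : L.Term (Fin k)
  rhs : L.Term (Fin k)

def EqId.Holds (e : EqId L) (M : Type u) [L.Structure M] : Prop :=
  ∀ x : Fin e.k → M, e.lhs.realize x = e.rhs.realize x

/-- A quasivariety: a class of algebras axiomatized by a set of quasi-identities. -/
def IsQuasivariety (Q : ∀ M : Type u, L.Structure M → Prop) : Prop :=
  ∃ S : Set (QuasiId L), ∀ (M : Type u) (iM : L.Structure M),
    Q M iM ↔ ∀ q ∈ S, @QuasiId.Holds L q M iM

/-- A variety: a class of algebras axiomatized by a set of identities. -/
def IsVariety (V : ∀ M : Type u, L.Structure M → Prop) : Prop :=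
  ∃ S : Set (EqId L), ∀ (M : Type u) (iM : L.Structure M),
    V M iM ↔ ∀ e ∈ S, @EqId.Holds L e M iM

/-- `F` is free for the class `Q` over the denumerable set of free generators `g 0, g 1, …`. -/
def IsFreeAlgOn (Q : ∀ M : Type u, L.Structure M → Prop)
    (F : Type u) [iF : L.Structure F] (g : ℕ → F) : Prop :=
  Q F iF ∧ Function.Injective g ∧
    ∀ (A : Type u) (iA : L.Structure A), Q A iA → ∀ f : ℕ → A,
      ∃! h : @Language.Hom L F A iF iA, ∀ m, h.toFun (g m) = f m

/-- Structural completeness: every quasi-identity true in the free algebra `F` holds in `Q`. -/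
def IsSC (Q : ∀ M : Type u, L.Structure M → Prop) (F : Type u) [L.Structure F] : Prop :=
  ∀ q : QuasiId L, q.Holds F →
    ∀ (M : Type u) (iM : L.Structure M), Q M iM → @QuasiId.Holds L q M iM

/-- Almost structural completeness: every active (premise satisfiable in `F`) quasi-identity
true in the free algebra `F` holds in `Q`. -/
def IsASC (Q : ∀ M : Type u, L.Structure M → Prop) (F : Type u) [L.Structure F] : Prop :=
  ∀ q : QuasiId L, q.Holds F → q.PremiseSat F →
    ∀ (M : Type u) (iM : L.Structure M), Q M iM → @QuasiId.Holds L q M iM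

/-- An idempotent element: forms a one-element subalgebra. -/
def IsIdemElem (M : Type u) [L.Structure M] (e : M) : Prop :=
  ∀ (m : ℕ) (f : L.Functions m), Structure.funMap f (fun _ : Fin m => e) = e

/-- Some elementary extension of `F` contains an idempotent element. -/
def HasIdemElemExtension (F : Type u) [iF : L.Structure F] : Prop :=
  ∃ (G : Type u) (iG : L.Structure G),
    Nonempty (@Language.ElementaryEmbedding L F G iF iG) ∧ ∃ e : G, @IsIdemElem L G iG e

/-- `r` is a `Q`-congruence of `S`: the kernel of a homomorphism into a member of `Q`
(equivalently, a congruence with quotient in `Q`). -/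
def IsQCong (Q : ∀ M : Type u, L.Structure M → Prop) (S : Type u) [iS : L.Structure S]
    (r : S → S → Prop) : Prop :=
  ∃ (A : Type u) (iA : L.Structure A), Q A iA ∧
    ∃ h : @Language.Hom L S A iS iA, ∀ a b, r a b ↔ h.toFun a = h.toFun b

/-- `S` is `Q`-simple: nontrivial, in `Q`, and its only `Q`-congruences are equality and the
total relation. -/
def IsQSimple (Q : ∀ M : Type u, L.Structure M → Prop) (S : Type u) [iS : L.Structure S] : Prop :=
  Nontrivial S ∧ Q S iS ∧
    ∀ r : S → S → Prop, IsQCong Q S r → (∀ a b, r a b ↔ a = b) ∨ (∀ a b, r a b)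

/-- `S` is `Q`-subdirectly irreducible: equality is completely meet-irreducible among the
`Q`-congruences of `S`. -/
def IsQSubdirectlyIrreducible (Q : ∀ M : Type u, L.Structure M → Prop)
    (S : Type u) [iS : L.Structure S] : Prop :=
  Nontrivial S ∧ Q S iS ∧
    ∀ (ι : Type u) (R : ι → S → S → Prop), (∀ i, IsQCong Q S (R i)) →
      (∀ a b, ((∀ i, R i a b) ↔ a = b)) → ∃ i, ∀ a b, R i a b ↔ a = b

/-- `Q` is semisimple: all `Q`-subdirectly irreducible algebras are `Q`-simple. -/
def IsSemisimple (Q : ∀ M : Type u, L.Structure M → Prop) : Prop :=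
  ∀ (S : Type u) (iS : L.Structure S),
    @IsQSubdirectlyIrreducible L Q S iS → @IsQSimple L Q S iS

def SubclassOf (Q' Q : ∀ M : Type u, L.Structure M → Prop) : Prop :=
  ∀ (M : Type u) (iM : L.Structure M), Q' M iM → Q M iM

/-- A minimal quasivariety: nontrivial, and every subquasivariety is trivial or the whole class. -/
def IsMinimalQuasivariety (Q : ∀ M : Type u, L.Structure M → Prop) : Prop :=
  (∃ (M : Type u) (iM : L.Structure M), Q M iM ∧ Nontrivial M) ∧
    ∀ Q' : ∀ M : Type u, L.Structure M → Prop, IsQuasivariety Q' → SubclassOf Q' Q →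
      (∀ (M : Type u) (iM : L.Structure M), Q' M iM → Subsingleton M) ∨
        (∀ (M : Type u) (iM : L.Structure M), Q M iM ↔ Q' M iM)

/-- A minimal variety: nontrivial, and every subvariety is trivial or the whole class. -/
def IsMinimalVariety (V : ∀ M : Type u, L.Structure M → Prop) : Prop :=
  (∃ (M : Type u) (iM : L.Structure M), V M iM ∧ Nontrivial M) ∧
    ∀ V' : ∀ M : Type u, L.Structure M → Prop, IsVariety V' → SubclassOf V' V →
      (∀ (M : Type u) (iM : L.Structure M), V' M iM → Subsingleton M) ∨
        (∀ (M : Type u) (iM : L.Structure M), V M iM ↔ V' M iM)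

/-- `t` interprets as the discriminator operation on `M`. -/
def IsDiscrTermOn (t : L.Term (Fin 3)) (M : Type u) [L.Structure M] : Prop :=
  ∀ a b c : M, (a ≠ b → t.realize ![a, b, c] = a) ∧ (a = b → t.realize ![a, b, c] = c)

/-- `V` is the variety generated by the class `K`. -/
def IsVarietyGeneratedBy (V K : ∀ M : Type u, L.Structure M → Prop) : Prop :=
  IsVariety V ∧ SubclassOf K V ∧ ∀ W, IsVariety W → SubclassOf K W → SubclassOf V W

/-- A discriminator variety: generated by a class of algebras with a common discriminator term. -/
def IsDiscriminatorVariety (V : ∀ M : Type u, L.Structure M → Prop) : Prop :=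
  ∃ (K : ∀ M : Type u, L.Structure M → Prop) (t : L.Term (Fin 3)),
    (∀ (M : Type u) (iM : L.Structure M), K M iM → @IsDiscrTermOn L t M iM) ∧
      IsVarietyGeneratedBy V K

/-- A congruence of an algebra. -/
def IsCongruence (M : Type u) [L.Structure M] (r : M → M → Prop) : Prop :=
  Equivalence r ∧ ∀ (m : ℕ) (f : L.Functions m) (a b : Fin m → M),
    (∀ i, r (a i) (b i)) → r (Structure.funMap f a) (Structure.funMap f b)

/-- A simple algebra: nontrivial with only trivial congruences. -/
def IsSimpleAlg (M : Type u) [L.Structure M] : Prop :=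
  Nontrivial M ∧ ∀ r : M → M → Prop, IsCongruence (L := L) M r →
    (∀ a b, r a b ↔ a = b) ∨ (∀ a b, r a b)

/-- `P` is `Q`-finitely presented: presented in `Q` by finitely many generators `v` and
finitely many relations `lhs i ≐ rhs i`. -/
def IsQFinPresented (Q : ∀ M : Type u, L.Structure M → Prop)
    (P : Type u) [iP : L.Structure P] : Prop :=
  Q P iP ∧ ∃ (k n : ℕ) (lhs rhs : Fin n → L.Term (Fin k)) (v : Fin k → P),
    (∀ i, (lhs i).realize v = (rhs i).realize v) ∧
    ∀ (A : Type u) (iA : L.Structure A), Q A iA → ∀ x : Fin k → A,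
      (∀ i, @Term.realize L A iA (Fin k) x (lhs i) = @Term.realize L A iA (Fin k) x (rhs i)) →
        ∃! h : @Language.Hom L P A iP iA, ∀ j, h.toFun (v j) = x j

/-- The coordinatewise structure on a direct product of algebras. -/
def piStruct {ι : Type u} {M : ι → Type u} (iM : ∀ i, L.Structure (M i)) :
    L.Structure (∀ i, M i) where
  funMap := fun {m} f x i => @Structure.funMap L (M i) (iM i) m f (fun j => x j i)
  RelMap := fun {m} r x => ∀ i, @Structure.RelMap L (M i) (iM i) m r (fun j => x j i)

instance piStructure {ι : Type u} {M : ι → Type u} [∀ i, L.Structure (M i)] :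
    L.Structure (∀ i, M i) :=
  piStruct fun i => inferInstance


/-!
If some elementary extension of `F` has an idempotent element `e`, the premise of every
quasi-identity holds at the constant assignment `e`, hence (being an existential sentence) is
satisfiable in `F`: all quasi-identities are active and ASC gives SC. If `Q` is minimal, the
quasi-identities valid in `F` axiomatize a nontrivial subquasivariety, which must be `Q`.

Conversely let `Q` be SC with no such extension. By compactness finitely many basic operations
have no common fixed point in `F`, so `⋀ f(x, …, x) ≐ x → y ≐ z` holds in `F`, hence in `Q`: no
nontrivial member of `Q` has an idempotent element. Let `B` be nontrivial in a subquasivariety and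
`q` valid in `B`. If `q` failed in `F`, it would fail in a `Q`-simple quotient `S` of `F` (a maximal
`Q`-congruence separating two elements has a `Q`-subdirectly irreducible quotient). By SC, every
finite part of the diagram of `S` is realized in `F`; composing with a homomorphism `F → B` gives
a homomorphism `S → B^U` into an ultrapower, which by simplicity of `S` is injective (so `q` holds
in `S`) or constant (so `B^U` has an idempotent element). Thus `q` holds in `F`, hence in `Q`.
-/

open Filter Structure

namespace FirstOrder.Language.Ultraproduct

variable {I : Type u} {U : Ultrafilter I} {A : I → Type u} [∀ i, L.Structure (A i)]

variable (U) in
/-- The bare coercion elaborates to a `Quotient.mk'` whose type is not syntactically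
`Filter.Product`, which breaks rewriting with the ultraproduct lemmas. -/
def mk (f : ∀ i, A i) : (U : Filter I).Product A := f

theorem mk_eq_mk_iff {f g : ∀ i, A i} : mk U f = mk U g ↔ ∀ᶠ i in U, f i = g i :=
  Quotient.eq''

theorem mk_surjective : Function.Surjective (mk U : (∀ i, A i) → (U : Filter I).Product A) :=
  Quotient.exists_rep

theorem funMap_mk {n : ℕ} (f : L.Functions n) (x : Fin n → ∀ i, A i) :
    (funMap f fun j => mk U (x j)) = mk U fun i => funMap f fun j => x j i :=
  funMap_cast f x

theorem realize_mk {k : ℕ} (t : L.Term (Fin k)) (x : Fin k → ∀ i, A i) :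
    (t.realize fun j => mk U (x j)) = mk U fun i => t.realize fun j => x j i :=
  term_realize_cast x t

variable (U) in
def diagonal (M : Type u) [L.Structure M] [Nonempty M] :
    M ↪ₑ[L] (U : Filter I).Product fun _ => M where
  toFun m := mk U fun _ => m
  map_formula' := by
    intro n φ x
    have h := realize_formula_cast (u := U) (M := fun _ : I => M) φ fun j _ => x j
    rwa [eventually_const] at h

variable (L U) in
def IsEventuallyHom {M : Type u} [L.Structure M] (φ : ∀ i, M → A i) : Prop :=
  ∀ {n} (f : L.Functions n) (x : Fin n → M),
    ∀ᶠ i in U, φ i (funMap f x) = funMap f fun j => φ i (x j)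

theorem IsEventuallyHom.comp {M : Type u} [L.Structure M] {B : I → Type u}
    [∀ i, L.Structure (B i)] {φ : ∀ i, M → A i} (hφ : IsEventuallyHom L U φ)
    (h : ∀ i, A i →[L] B i) : IsEventuallyHom L U fun i => h i ∘ φ i := fun f x =>
  (hφ f x).mono fun i hi => by simp only [Function.comp_apply, hi, HomClass.map_fun]; rfl

variable [L.IsAlgebraic] {M : Type u} [L.Structure M]

def liftHom (φ : ∀ i, M → A i) (hφ : IsEventuallyHom L U φ) :
    M →[L] (U : Filter I).Product A where
  toFun z := mk U fun i => φ i z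
  map_fun' f x := by
    rw [Function.comp_def, funMap_mk]
    exact mk_eq_mk_iff.2 (hφ f x)
  map_rel' r := isEmptyElim r

theorem liftHom_apply_eq_iff {φ : ∀ i, M → A i} {hφ : IsEventuallyHom L U φ} {z z' : M} :
    liftHom φ hφ z = liftHom φ hφ z' ↔ ∀ᶠ i in U, φ i z = φ i z' :=
  mk_eq_mk_iff

end FirstOrder.Language.Ultraproduct

open Ultraproduct

namespace QuasiId

theorem Holds.ultraproduct {I : Type u} {U : Ultrafilter I} {A : I → Type u}
    [∀ i, L.Structure (A i)] {q : QuasiId L} (hq : ∀ i, q.Holds (A i)) :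
    q.Holds ((U : Filter I).Product A) := by
  intro x hx
  choose y hy using fun j => mk_surjective (x j)
  obtain rfl : (fun j => Ultraproduct.mk U (y j)) = x := funext hy
  simp only [realize_mk, mk_eq_mk_iff] at hx ⊢
  exact ((eventually_all.2 hx).mono fun i hi => hq i _ hi)

theorem Holds.of_injective {M N : Type u} [L.Structure M] [L.Structure N]
    {q : QuasiId L} (hq : q.Holds N) (h : M →[L] N) (hinj : Function.Injective h) :
    q.Holds M := fun x hx => by
  apply hinj
  rw [← HomClass.realize_term, ← HomClass.realize_term]
  exact hq _ fun i => by rw [HomClass.realize_term, HomClass.realize_term, hx i]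

noncomputable def ofFintype {α ι : Type*} [Fintype α] [Fintype ι] (lhs rhs : ι → L.Term α)
    (cl cr : L.Term α) : QuasiId L where
  k := Fintype.card α
  n := Fintype.card ι
  lhs i := (lhs ((Fintype.equivFin ι).symm i)).relabel (Fintype.equivFin α)
  rhs i := (rhs ((Fintype.equivFin ι).symm i)).relabel (Fintype.equivFin α)
  cl := cl.relabel (Fintype.equivFin α)
  cr := cr.relabel (Fintype.equivFin α)

theorem holds_ofFintype_iff {α ι : Type*} [Fintype α] [Fintype ι] {lhs rhs : ι → L.Term α}
    {cl cr : L.Term α} {M : Type u} [L.Structure M] :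
    (ofFintype lhs rhs cl cr).Holds M ↔ ∀ x : α → M,
      (∀ i, (lhs i).realize x = (rhs i).realize x) → cl.realize x = cr.realize x := by
  simp only [Holds, ofFintype, Term.realize_relabel]
  refine ((Fintype.equivFin α).arrowCongr (Equiv.refl M)).symm.forall_congr_left.trans
    (forall_congr' fun x => ?_)
  have hx : (Fintype.equivFin α).arrowCongr (Equiv.refl M) x ∘ Fintype.equivFin α = x :=
    funext fun a => by simp
  simp only [hx, (Fintype.equivFin ι).symm.forall_congr_left, Equiv.symm_symm,
    Equiv.symm_apply_apply]

noncomputable def premise (q : QuasiId L) : L.BoundedFormula Empty q.k :=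
  BoundedFormula.iInf fun i => ((q.lhs i).relabel Sum.inr).bdEqual ((q.rhs i).relabel Sum.inr)

theorem realize_exs_premise (q : QuasiId L) (M : Type u) [L.Structure M] :
    M ⊨ q.premise.exs ↔ q.PremiseSat M := by
  rw [Sentence.Realize, BoundedFormula.realize_exs]
  simp [premise, PremiseSat]

end QuasiId

namespace IsQuasivariety

variable {Q : ∀ M : Type u, L.Structure M → Prop}

theorem of_injective (hQ : IsQuasivariety Q) {M N : Type u} [iM : L.Structure M]
    [iN : L.Structure N] (hN : Q N iN) (h : M →[L] N) (hinj : Function.Injective h) :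
    Q M iM := by
  obtain ⟨S, hS⟩ := hQ
  exact (hS M iM).2 fun q hq => ((hS N iN).1 hN q hq).of_injective h hinj

theorem ultraproduct (hQ : IsQuasivariety Q) {I : Type u} (U : Ultrafilter I) {A : I → Type u}
    [iA : ∀ i, L.Structure (A i)] (hA : ∀ i, Q (A i) (iA i)) :
    Q ((U : Filter I).Product A) inferInstance := by
  obtain ⟨S, hS⟩ := hQ
  exact (hS _ _).2 fun q hq => QuasiId.Holds.ultraproduct fun i => (hS _ _).1 (hA i) q hq

end IsQuasivariety

theorem FirstOrder.Language.Term.realize_const_of_isIdemElem {M : Type u} [L.Structure M] {e : M}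
    (he : IsIdemElem (L := L) M e) {α : Type*} (t : L.Term α) : t.realize (fun _ => e) = e := by
  induction t with
  | var => rfl
  | func f ts ih => simp only [Term.realize, ih]; exact he _ f

theorem isIdemElem_of_forall_apply_eq {M N : Type u} [L.Structure M] [L.Structure N]
    (h : M →[L] N) (hconst : ∀ a b, h a = h b) (a : M) : IsIdemElem (L := L) N (h a) :=
  fun _ f => (HomClass.map_fun h f fun _ => a).symm.trans (hconst _ _)

theorem QuasiId.premiseSat_of_hasIdemElemExtension {F : Type u} [L.Structure F]
    (h : HasIdemElemExtension (L := L) F) (q : QuasiId L) : q.PremiseSat F := by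
  obtain ⟨G, _, ⟨φ⟩, e, he⟩ := h
  rw [← realize_exs_premise, φ.map_sentence, realize_exs_premise]
  exact ⟨fun _ => e, fun i => by
    rw [Term.realize_const_of_isIdemElem he, Term.realize_const_of_isIdemElem he]⟩

/-- Compactness, via an ultrapower of `F` indexed by the finite sets of basic operations. -/
theorem exists_finset_funMap_ne_of_not_hasIdemElemExtension {F : Type u} [L.Structure F]
    [Nonempty F] (h : ¬HasIdemElemExtension (L := L) F) :
    ∃ G : Finset (Σ n, L.Functions n), ∀ e : F, ∃ f ∈ G, funMap f.2 (fun _ => e) ≠ e := by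
  classical
  by_contra! hG
  choose e he using hG
  let U : Ultrafilter (Finset (Σ n, L.Functions n)) := .of atTop
  refine h ⟨_, inferInstance, ⟨Ultraproduct.diagonal U F⟩, Ultraproduct.mk U e, fun m f => ?_⟩
  rw [Ultraproduct.funMap_mk (x := fun _ => e), Ultraproduct.mk_eq_mk_iff]
  exact ((eventually_ge_atTop {⟨m, f⟩}).filter_mono (Ultrafilter.of_le _)).mono
    fun G hG => he G _ (hG (Finset.mem_singleton_self _))

theorem IsSC.subsingleton_of_isIdemElem {Q : ∀ M : Type u, L.Structure M → Prop} {F : Type u}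
    [L.Structure F] [Nonempty F] (hsc : IsSC Q F) (hF : ¬HasIdemElemExtension (L := L) F)
    {M : Type u} [iM : L.Structure M] (hM : Q M iM) {e : M} (he : IsIdemElem (L := L) M e) :
    Subsingleton M := by
  obtain ⟨G, hG⟩ := exists_finset_funMap_ne_of_not_hasIdemElemExtension hF
  -- `⋀ f ∈ G, f(x, …, x) ≐ x → y ≐ z` holds vacuously in `F`
  let q : QuasiId L := .ofFintype (fun f : G => Term.func f.1.2 fun _ => Term.var (0 : Fin 3))
    (fun _ => Term.var 0) (Term.var 1) (Term.var 2)
  have hqF : q.Holds F := QuasiId.holds_ofFintype_iff.2 fun x hx => by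
    obtain ⟨f, hf, hne⟩ := hG (x 0)
    exact absurd (hx ⟨f, hf⟩) hne
  have hqM := QuasiId.holds_ofFintype_iff.1 (hsc q hqF M iM hM)
  exact ⟨fun a b => hqM ![e, a, b] fun _ => he _ _⟩

section QCong

variable {Q : ∀ M : Type u, L.Structure M → Prop}

theorem isQCong_eq {S : Type u} [iS : L.Structure S] (hS : Q S iS) : IsQCong Q S (· = ·) :=
  ⟨S, iS, hS, Hom.id L S, fun _ _ => Iff.rfl⟩

theorem IsQCong.comap {F S : Type u} [L.Structure F] [L.Structure S] {r : S → S → Prop}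
    (hr : IsQCong Q S r) (π : F →[L] S) : IsQCong Q F fun x y => r (π x) (π y) := by
  obtain ⟨A, iA, hA, h, hker⟩ := hr
  exact ⟨A, iA, hA, h.comp π, fun x y => hker _ _⟩

variable [L.IsAlgebraic]

/-- The union of a chain of `Q`-congruences is the kernel of the induced map into an
ultraproduct of the quotients, over an ultrafilter containing all final segments of the chain. -/
theorem IsQuasivariety.isQCong_sUnion (hQ : IsQuasivariety Q) {S : Type u} [L.Structure S]
    {c : Set (Set (S × S))} (hc : IsChain (· ⊆ ·) c) (hne : c.Nonempty)
    (hcong : ∀ s ∈ c, IsQCong Q S fun x y => (x, y) ∈ s) :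
    IsQCong Q S fun x y => (x, y) ∈ ⋃₀ c := by
  have : Nonempty c := hne.to_subtype
  have : IsDirectedOrder c := hc.directedOn.isDirectedOrder
  choose A iA hA h hker using fun s : c => hcong s s.2
  let _ := iA
  let U : Ultrafilter c := .of atTop
  refine ⟨_, _, hQ.ultraproduct U hA, Ultraproduct.liftHom (fun s => h s)
    fun f x => .of_forall fun s => HomClass.map_fun (h s) f x,
    fun x y => Iff.trans ?_ Ultraproduct.liftHom_apply_eq_iff.symm⟩
  constructor
  · rintro ⟨s, hs, hxy⟩
    exact ((eventually_ge_atTop ⟨s, hs⟩).filter_mono (Ultrafilter.of_le _)).mono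
      fun t hst => (hker t x y).1 (hst hxy)
  · intro hxy
    obtain ⟨t, ht⟩ := hxy.exists
    exact ⟨t, t.2, (hker t x y).2 ht⟩

theorem IsQuasivariety.exists_maximal_isQCong_not_mem (hQ : IsQuasivariety Q) {S : Type u}
    [iS : L.Structure S] (hS : Q S iS) {a b : S} (hab : a ≠ b) :
    ∃ s : Set (S × S), Maximal (fun t => (IsQCong Q S fun x y => (x, y) ∈ t) ∧ (a, b) ∉ t) s := by
  obtain ⟨s, -, hs⟩ := zorn_subset_nonempty {t | (IsQCong Q S fun x y => (x, y) ∈ t) ∧ (a, b) ∉ t}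
    (fun c hcS hc hne => ⟨⋃₀ c, ⟨hQ.isQCong_sUnion hc hne fun s hs => (hcS hs).1,
      fun ⟨s, hs, hab⟩ => (hcS hs).2 hab⟩, fun _ => Set.subset_sUnion_of_mem⟩)
    {p | p.1 = p.2} ⟨isQCong_eq hS, hab⟩
  exact ⟨s, hs⟩

end QCong

section QSimple

variable {Q : ∀ M : Type u, L.Structure M → Prop}

theorem isQSubdirectlyIrreducible_of_maximal {F S : Type u} [L.Structure F] [iS : L.Structure S]
    (hS : Q S iS) (π : F →[L] S) (hπ : Function.Surjective π) {a b : F}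
    (hmax : Maximal (fun t => (IsQCong Q F fun x y => (x, y) ∈ t) ∧ (a, b) ∉ t)
      {p | π p.1 = π p.2}) :
    IsQSubdirectlyIrreducible Q S := by
  refine ⟨⟨_, _, hmax.prop.2⟩, hS, fun ι R hR hmeet => ?_⟩
  obtain ⟨i, hi⟩ : ∃ i, ¬R i (π a) (π b) := by
    by_contra! h
    exact hmax.prop.2 ((hmeet _ _).1 h)
  have hrefl : ∀ z, R i z z := fun z => by
    obtain ⟨A, iA, -, e, he⟩ := hR i
    exact (he z z).2 rfl
  have hker : {p : F × F | π p.1 = π p.2} = {p | R i (π p.1) (π p.2)} :=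
    hmax.eq_of_subset ⟨(hR i).comap π, hi⟩ fun p (hp : π p.1 = π p.2) =>
      show R i _ _ from hp ▸ hrefl _
  refine ⟨i, hπ.forall₂.2 fun x y => ⟨fun hxy => ?_, fun hxy => hxy ▸ hrefl _⟩⟩
  exact (Set.ext_iff.1 hker (x, y)).2 hxy

variable [L.IsAlgebraic]

theorem IsQuasivariety.exists_hom_isQSimple (hQ : IsQuasivariety Q) (hss : IsSemisimple Q)
    {F : Type u} [iF : L.Structure F] (hF : Q F iF) {a b : F} (hab : a ≠ b) :
    ∃ (S : Type u) (_ : L.Structure S) (π : F →[L] S), π a ≠ π b ∧ IsQSimple Q S := by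
  obtain ⟨s, hs⟩ := hQ.exists_maximal_isQCong_not_mem hF hab
  obtain ⟨A, iA, hA, h, hker⟩ := hs.prop.1
  let π := h.codRestrict h.range h.mem_range_self
  have hπ : {p : F × F | π p.1 = π p.2} = s :=
    Set.ext fun p => Subtype.ext_iff.trans (hker p.1 p.2).symm
  have hπsurj : Function.Surjective π := by
    rintro ⟨_, x, rfl⟩
    exact ⟨x, rfl⟩
  have hQS : Q h.range _ := hQ.of_injective hA h.range.subtype.toHom Subtype.val_injective
  exact ⟨h.range, inferInstance, π, fun hc => hs.prop.2 (hπ ▸ hc),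
    hss _ _ (isQSubdirectlyIrreducible_of_maximal hQS π hπsurj (hπ ▸ hs))⟩

end QSimple

section LocalHom

variable {Q : ∀ M : Type u, L.Structure M → Prop} {F : Type u} [L.Structure F]

/-- The finite part of the diagram of `S` on `Y` and `G`, read as a quasi-identity with conclusion
`a ≐ b`, fails in `S`, hence in `F`; a falsifying assignment is the required partial map. -/
theorem IsSC.exists_partialHom (hsc : IsSC Q F) {S : Type u} [iS : L.Structure S] (hS : Q S iS)
    {a b : S} (hab : a ≠ b) (Y : Finset S) (ha : a ∈ Y) (hb : b ∈ Y)
    (G : Finset (Σ n, L.Functions n)) :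
    ∃ φ : S → F, ∀ f ∈ G, ∀ v : Fin f.1 → S, (∀ j, v j ∈ Y) → funMap f.2 v ∈ Y →
      φ (funMap f.2 v) = funMap f.2 (φ ∘ v) := by
  classical
  let D := {p : Σ f : G, Fin f.1.1 → Y // funMap p.1.1.2 (fun j => (p.2 j : S)) ∈ Y}
  let q : QuasiId L := .ofFintype (fun p : D => Term.func p.1.1.1.2 fun j => Term.var (p.1.2 j))
    (fun p => Term.var ⟨_, p.2⟩) (Term.var ⟨a, ha⟩) (Term.var ⟨b, hb⟩)
  have hqS : ¬q.Holds S := fun hq =>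
    hab <| QuasiId.holds_ofFintype_iff.1 hq Subtype.val fun _ => rfl
  obtain ⟨x, hx⟩ := not_forall.1 (mt QuasiId.holds_ofFintype_iff.2 (mt (hsc q · S iS hS) hqS))
  obtain ⟨hx, -⟩ := Classical.not_imp.1 hx
  refine ⟨fun z => if hz : z ∈ Y then x ⟨z, hz⟩ else x ⟨a, ha⟩, fun f hf v hv hfv => ?_⟩
  have := hx ⟨⟨⟨f, hf⟩, fun j => ⟨v j, hv j⟩⟩, hfv⟩
  simpa [Function.comp_def, hv, hfv] using this.symm

theorem IsSC.exists_isEventuallyHom (hsc : IsSC Q F) {S : Type u} [iS : L.Structure S]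
    (hS : Q S iS) [Nontrivial S] :
    ∃ (I : Type u) (U : Ultrafilter I) (φ : I → S → F),
      Ultraproduct.IsEventuallyHom L U (A := fun _ => F) φ := by
  classical
  obtain ⟨a, b, hab⟩ := exists_pair_ne S
  choose φ hφ using fun i : Finset S × Finset (Σ n, L.Functions n) =>
    hsc.exists_partialHom hS hab (insert a (insert b i.1)) (by simp) (by simp) i.2
  refine ⟨_, .of atTop, φ, fun {n} f x => ?_⟩
  filter_upwards [(eventually_ge_atTop (insert (funMap f x) (Finset.univ.image x),
    {⟨n, f⟩})).filter_mono (Ultrafilter.of_le _)] with i hi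
  have hY : insert (funMap f x) (Finset.univ.image x) ⊆ insert a (insert b i.1) :=
    hi.1.trans ((Finset.subset_insert _ _).trans (Finset.subset_insert _ _))
  exact hφ i ⟨n, f⟩ (hi.2 (Finset.mem_singleton_self _)) x
    (fun j => hY (by simp)) (hY (Finset.mem_insert_self _ _))

end LocalHom

theorem IsFreeAlgOn.nontrivial {Q : ∀ M : Type u, L.Structure M → Prop} {F : Type u}
    [L.Structure F] {g : ℕ → F} (hF : IsFreeAlgOn Q F g) : Nontrivial F :=
  ⟨g 0, g 1, hF.2.1.ne zero_ne_one⟩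

section Main

variable {Q : ∀ M : Type u, L.Structure M → Prop} {F : Type u} [iF : L.Structure F]

theorem IsASC.isSC_of_hasIdemElemExtension (hASC : IsASC Q F)
    (h : HasIdemElemExtension (L := L) F) : IsSC Q F :=
  fun q hq => hASC q hq (q.premiseSat_of_hasIdemElemExtension h)

theorem IsMinimalQuasivariety.isSC (hmin : IsMinimalQuasivariety Q) (hQ : IsQuasivariety Q)
    [Nontrivial F] (hF : Q F iF) : IsSC Q F := by
  obtain ⟨S, hS⟩ := hQ
  rcases hmin.2 (fun M _ => ∀ q : QuasiId L, q.Holds F → q.Holds M)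
    ⟨{q | q.Holds F}, fun _ _ => Iff.rfl⟩
    (fun M iM hM => (hS M iM).2 fun q hq => hM q ((hS F iF).1 hF q hq)) with htriv | heq
  · exact absurd (htriv F iF fun q hq => hq) (not_subsingleton F)
  · exact fun q hq M iM hM => (heq M iM).1 hM q hq

variable [L.IsAlgebraic]

theorem QuasiId.holds_of_holds_of_isSC (hQ : IsQuasivariety Q) (hss : IsSemisimple Q)
    [Nonempty F] (hF : Q F iF) (hsc : IsSC Q F) (hnidem : ¬HasIdemElemExtension (L := L) F)
    {B : Type u} [iB : L.Structure B] [Nontrivial B] (hB : Q B iB) (h₀ : F →[L] B)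
    {q : QuasiId L} (hq : q.Holds B) : q.Holds F := by
  by_contra hqF
  obtain ⟨x, hx, hne⟩ : ∃ x : Fin q.k → F, (∀ i, (q.lhs i).realize x = (q.rhs i).realize x) ∧
      q.cl.realize x ≠ q.cr.realize x := by
    simpa [QuasiId.Holds] using hqF
  obtain ⟨S, _, π, hπ, _, hS, hsimple⟩ := hQ.exists_hom_isQSimple hss hF hne
  obtain ⟨I, U, φ, hφ⟩ := hsc.exists_isEventuallyHom hS
  let Ψ : S →[L] (U : Filter I).Product fun _ => B :=
    Ultraproduct.liftHom _ (hφ.comp fun _ => h₀)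
  have hBU := hQ.ultraproduct U fun _ => hB
  rcases hsimple _ ⟨_, _, hBU, Ψ, fun _ _ => Iff.rfl⟩ with hinj | hconst
  · have hqS : q.Holds S := (QuasiId.Holds.ultraproduct fun _ => hq).of_injective Ψ
      fun a b hab => (hinj a b).1 hab
    apply hπ
    rw [← HomClass.realize_term, ← HomClass.realize_term]
    exact hqS _ fun i => by rw [HomClass.realize_term, HomClass.realize_term, hx i]
  · have := (Ultraproduct.diagonal (L := L) U B).injective.nontrivial
    obtain ⟨s₀, -⟩ := exists_pair_ne S
    exact not_subsingleton _
      (hsc.subsingleton_of_isIdemElem hnidem hBU (isIdemElem_of_forall_apply_eq Ψ hconst s₀))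

theorem IsSC.isMinimalQuasivariety (hQ : IsQuasivariety Q) (hss : IsSemisimple Q) {g : ℕ → F}
    (hF : IsFreeAlgOn Q F g) (hsc : IsSC Q F) (hnidem : ¬HasIdemElemExtension (L := L) F) :
    IsMinimalQuasivariety Q := by
  have := hF.nontrivial
  refine ⟨⟨F, iF, hF.1, inferInstance⟩, fun Q' ⟨S', hS'⟩ hQ'Q =>
    or_iff_not_imp_left.2 fun hnt => ?_⟩
  push Not at hnt
  obtain ⟨B, iB, hB, hBnt⟩ := hnt
  obtain ⟨h₀, -⟩ := (hF.2.2 B iB (hQ'Q B iB hB) fun _ => Classical.arbitrary B).exists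
  refine fun M iM => ⟨fun hM => (hS' M iM).2 fun q hq => hsc q ?_ M iM hM, hQ'Q M iM⟩
  exact QuasiId.holds_of_holds_of_isSC hQ hss hF.1 hsc hnidem (hQ'Q B iB hB) h₀
    ((hS' B iB).1 hB q hq)

end Main

theorem stmt_4 {L : FirstOrder.Language.{u, u}} [L.IsAlgebraic]
    (Q : ∀ M : Type u, L.Structure M → Prop) (hQ : IsQuasivariety Q)
    (F : Type u) [iF : L.Structure F] (g : ℕ → F) (hF : IsFreeAlgOn Q F g)
    (hASC : IsASC Q F) (hss : IsSemisimple Q) :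
    IsSC Q F ↔ (HasIdemElemExtension (L := L) F ∨ IsMinimalQuasivariety Q) := by
  have := hF.nontrivial
  refine ⟨fun hsc => or_iff_not_imp_left.2 (hsc.isMinimalQuasivariety hQ hss hF), ?_⟩
  rintro (hidem | hmin)
  · exact hASC.isSC_of_hasIdemElemExtension hidem
  · exact hmin.isSC hQ hF.1
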